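/- (Abstract form of Theorem 3.1(1): relation between Whittaker–Betti periods and relative periods in bottom degree.) Assume the nonzero complex numbers p₊, p₋, p₊', p₋', Ω, Ω' satisfy: (W1) for all w ∈ W, σ(p₊)⁻¹ • s₊(F₊ w) = (p₊')⁻¹ • F₊'(s_W w); (W2) for all w ∈ W, σ(p₋)⁻¹ • s₋(F₋ w) = (p₋')⁻¹ • F₋'(s_W w); (R) for all h ∈ H₊, σ(Ω) • s₋(T h) = Ω' • T'(s₊ h); (C) T ∘ F₊ = F₋ and T' ∘ F₊' = F₋'. Then σ(p₊ · (p₋ · Ω)⁻¹) = p₊' · (p₋' · Ω')⁻¹. -/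

import Mathlib

/-!
Evaluate all three comparisons on one vector. For `w ≠ 0` put `v := F₋'(s_W w) ≠ 0`. By (W1), (W2)
and (C), `s₋(F₋ w) = (σ p₋ / p₋') • v` and `T'(s₊(F₊ w)) = (σ p₊ / p₊') • v`, so (R) applied to
`h = F₊ w` reads `σ Ω · σ p₋ / p₋' • v = Ω' · σ p₊ / p₊' • v`. Cancelling `v` gives a scalar identity
which rearranges to the claim.
-/

theorem smul_eq_div_smul_of_inv_smul_eq_inv_smul {α β : Type*} [GroupWithZero α] [MulAction α β]
    {a b : α} {x y : β} (ha : a ≠ 0) (h : a⁻¹ • x = b⁻¹ • y) : x = (a / b) • y := by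
  rw [inv_smul_eq_iff₀ ha] at h
  rw [h, smul_smul, div_eq_mul_inv]

theorem mul_inv_mul_eq_of_mul_div_eq {K : Type*} [Field K] {a b c a' b' c' : K}
    (hb : b ≠ 0) (hc : c ≠ 0) (hb' : b' ≠ 0) (h : c * (b / b') = c' * (a / a')) :
    a * (b * c)⁻¹ = a' * (b' * c')⁻¹ := by
  have hne : c' * (a / a') ≠ 0 := h ▸ mul_ne_zero hc (div_ne_zero hb hb')
  obtain ⟨hc', -, ha'⟩ : c' ≠ 0 ∧ a ≠ 0 ∧ a' ≠ 0 := by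
    simpa only [mul_ne_zero_iff, div_ne_zero_iff] using hne
  field_simp at h ⊢
  linear_combination -h

theorem whittaker_betti_relative_period_relation_general
    (σ : ℂ ≃+* ℂ)
    {W W' Hp Hm Hp' Hm' : Type*}
    [AddCommGroup W] [Module ℂ W] [AddCommGroup W'] [Module ℂ W']
    [AddCommGroup Hp] [Module ℂ Hp] [AddCommGroup Hm] [Module ℂ Hm]
    [AddCommGroup Hp'] [Module ℂ Hp'] [AddCommGroup Hm'] [Module ℂ Hm']
    -- ℂ-linear isomorphisms
    (Fp : W ≃ₗ[ℂ] Hp) (Fm : W ≃ₗ[ℂ] Hm)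
    (Fp' : W' ≃ₗ[ℂ] Hp') (Fm' : W' ≃ₗ[ℂ] Hm')
    (T : Hp ≃ₗ[ℂ] Hm) (T' : Hp' ≃ₗ[ℂ] Hm')
    -- σ-semilinear bijections
    (s_W : W →ₛₗ[(σ : ℂ →+* ℂ)] W')
    (sp : Hp →ₛₗ[(σ : ℂ →+* ℂ)] Hp')
    (sm : Hm →ₛₗ[(σ : ℂ →+* ℂ)] Hm')
    (hsW : Function.Bijective s_W)
    -- W is nontrivial
    (hW : ∃ w : W, w ≠ 0)
    -- the periods
    (pp pm pp' pm' Ω Ω' : ℂ)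
    (hpp : pp ≠ 0) (hpm : pm ≠ 0) (hpm' : pm' ≠ 0)
    (hΩ : Ω ≠ 0)
    -- (W1)
    (hW1 : ∀ w : W, (σ pp)⁻¹ • sp (Fp w) = (pp')⁻¹ • Fp' (s_W w))
    -- (W2)
    (hW2 : ∀ w : W, (σ pm)⁻¹ • sm (Fm w) = (pm')⁻¹ • Fm' (s_W w))
    -- (R)
    (hR : ∀ h : Hp, σ Ω • sm (T h) = Ω' • T' (sp h))
    -- (C)
    (hC : ∀ w : W, T (Fp w) = Fm w)
    (hC' : ∀ w' : W', T' (Fp' w') = Fm' w') :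
    σ (pp * (pm * Ω)⁻¹) = pp' * (pm' * Ω')⁻¹ := by
  obtain ⟨w, hw⟩ := hW
  have hv : Fm' (s_W w) ≠ 0 :=
    (map_ne_zero_iff _ Fm'.injective).2 ((map_ne_zero_iff _ hsW.injective).2 hw)
  have hm : sm (Fm w) = (σ pm / pm') • Fm' (s_W w) :=
    smul_eq_div_smul_of_inv_smul_eq_inv_smul ((map_ne_zero σ).2 hpm) (hW2 w)
  have hp : T' (sp (Fp w)) = (σ pp / pp') • Fm' (s_W w) := by
    rw [smul_eq_div_smul_of_inv_smul_eq_inv_smul ((map_ne_zero σ).2 hpp) (hW1 w), map_smul, hC']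
  have hscalar : σ Ω * (σ pm / pm') = Ω' * (σ pp / pp') :=
    smul_left_injective ℂ hv (by simpa only [hC, hm, hp, smul_smul] using hR (Fp w))
  rw [map_mul, map_inv₀, map_mul]
  exact mul_inv_mul_eq_of_mul_div_eq ((map_ne_zero σ).2 hpm) ((map_ne_zero σ).2 hΩ) hpm' hscalar

/-- Abstract form of Theorem 3.1(1): relation between Whittaker–Betti periods
and relative periods in bottom degree. -/
theorem whittaker_betti_relative_period_relation
    (σ : ℂ ≃+* ℂ)
    {W W' Hp Hm Hp' Hm' : Type*}
    [AddCommGroup W] [Module ℂ W] [AddCommGroup W'] [Module ℂ W']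
    [AddCommGroup Hp] [Module ℂ Hp] [AddCommGroup Hm] [Module ℂ Hm]
    [AddCommGroup Hp'] [Module ℂ Hp'] [AddCommGroup Hm'] [Module ℂ Hm']
    -- ℂ-linear isomorphisms
    (Fp : W ≃ₗ[ℂ] Hp) (Fm : W ≃ₗ[ℂ] Hm)
    (Fp' : W' ≃ₗ[ℂ] Hp') (Fm' : W' ≃ₗ[ℂ] Hm')
    (T : Hp ≃ₗ[ℂ] Hm) (T' : Hp' ≃ₗ[ℂ] Hm')
    -- σ-semilinear bijections
    (s_W : W →ₛₗ[(σ : ℂ →+* ℂ)] W')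
    (sp : Hp →ₛₗ[(σ : ℂ →+* ℂ)] Hp')
    (sm : Hm →ₛₗ[(σ : ℂ →+* ℂ)] Hm')
    (hsW : Function.Bijective s_W)
    (hsp : Function.Bijective sp)
    (hsm : Function.Bijective sm)
    -- W is nontrivial
    (hW : ∃ w : W, w ≠ 0)
    -- the periods
    (pp pm pp' pm' Ω Ω' : ℂ)
    (hpp : pp ≠ 0) (hpm : pm ≠ 0) (hpp' : pp' ≠ 0) (hpm' : pm' ≠ 0)
    (hΩ : Ω ≠ 0) (hΩ' : Ω' ≠ 0)
    -- (W1)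
    (hW1 : ∀ w : W, (σ pp)⁻¹ • sp (Fp w) = (pp')⁻¹ • Fp' (s_W w))
    -- (W2)
    (hW2 : ∀ w : W, (σ pm)⁻¹ • sm (Fm w) = (pm')⁻¹ • Fm' (s_W w))
    -- (R)
    (hR : ∀ h : Hp, σ Ω • sm (T h) = Ω' • T' (sp h))
    -- (C)
    (hC : ∀ w : W, T (Fp w) = Fm w)
    (hC' : ∀ w' : W', T' (Fp' w') = Fm' w') :
    σ (pp * (pm * Ω)⁻¹) = pp' * (pm' * Ω')⁻¹ :=
  whittaker_betti_relative_period_relation_general σ Fp Fm Fp' Fm' T T' s_W sp sm hsW hW pp pm pp'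
    pm' Ω Ω' hpp hpm hpm' hΩ hW1 hW2 hR hC hC'
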